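/- Let F be a field and A, B : Matrix (Fin m) (Fin m) F, with k_A = m − rank(A) and k_B = m − rank(B). Let H_X = [A ⊗ I_m, −(I_m ⊗ B)] and H_Z = [I_m ⊗ Bᵀ, Aᵀ ⊗ I_m]. Then the dimension of the associated CSS (lifted product) code equals 2·k_A·k_B; that is, 2·m² = rank(H_X) + rank(H_Z) + 2·k_A·k_B. -/

import Mathlib

/-!
Both check matrices have rank `m² - k_A k_B`. Multiplying `A` and `B` on either side by
invertible matrices changes neither side of this claim, so we may take `A` and `B` diagonal,
with diagonals `d` and `e`. Then the columns of `[A ⊗ 1, 1 ⊗ B]` span exactly the coordinate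
vectors `e_i ⊗ e_j` with `d i ≠ 0` or `e j ≠ 0`, of which there are `m² - k_A k_B`. For `H_Z`
the same count applies to `Aᵀ`, `Bᵀ`, which have the same ranks.
-/

open Matrix
open Kronecker

namespace Matrix

variable {F : Type*} [Field F]

theorem exists_isUnit_det_mul_diagonal_mul {n : Type*} [Fintype n] [DecidableEq n]
    (A : Matrix n n F) :
    ∃ (P Q : Matrix n n F) (d : n → F),
      IsUnit P.det ∧ IsUnit Q.det ∧ A = P * diagonal d * Q := by
  obtain ⟨L, L', d, h⟩ := Pivot.exists_list_transvec_mul_diagonal_mul_list_transvec A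
  refine ⟨_, _, d, ?_, ?_, h⟩ <;> simp only [TransvectionStruct.det_toMatrix_prod, isUnit_one]

theorem isUnit_det_kronecker {R : Type*} [CommRing R] {m n : Type*} [Fintype m] [Fintype n]
    [DecidableEq m] [DecidableEq n]
    {P : Matrix m m R} {P' : Matrix n n R} (hP : IsUnit P.det) (hP' : IsUnit P'.det) :
    IsUnit (P ⊗ₖ P').det := by
  rw [det_kronecker]
  exact (hP.pow _).mul (hP'.pow _)

section FromCols

variable {R : Type*} [CommRing R] {l n₁ n₂ : Type*} [Fintype n₁] [Fintype n₂]

theorem rank_fromCols_mul_mul [Fintype l] [DecidableEq l] [DecidableEq n₁] [DecidableEq n₂]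
    {X : Matrix l l R} {Y : Matrix n₁ n₁ R} {Z : Matrix n₂ n₂ R}
    (hX : IsUnit X.det) (hY : IsUnit Y.det) (hZ : IsUnit Z.det)
    (M : Matrix l n₁ R) (N : Matrix l n₂ R) :
    (fromCols (X * M * Y) (X * N * Z)).rank = (fromCols M N).rank := by
  have hfactor : fromCols (X * M * Y) (X * N * Z) = X * fromCols M N * fromBlocks Y 0 0 Z := by
    rw [mul_fromCols, fromCols_mul_fromBlocks]
    simp only [Matrix.mul_zero, add_zero, zero_add]
  have hblock : IsUnit (fromBlocks Y 0 0 Z).det := by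
    rw [det_fromBlocks_zero₂₁]
    exact hY.mul hZ
  rw [hfactor, rank_mul_eq_left_of_isUnit_det _ _ hblock, rank_mul_eq_right_of_isUnit_det _ _ hX]

theorem rank_fromCols_comm (M : Matrix l n₁ R) (N : Matrix l n₂ R) :
    (fromCols N M).rank = (fromCols M N).rank := by
  have hswap :
      fromCols N M = (fromCols M N).submatrix (Equiv.refl l) (Equiv.sumComm n₂ n₁) := by
    ext i (j | j) <;> rfl
  rw [hswap, rank_submatrix]

theorem range_mulVecLin_fromCols (M : Matrix l n₁ R) (N : Matrix l n₂ R) :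
    LinearMap.range (fromCols M N).mulVecLin
      = LinearMap.range M.mulVecLin ⊔ LinearMap.range N.mulVecLin := by
  rw [range_mulVecLin, range_mulVecLin, range_mulVecLin, col, col, col, transpose_fromCols,
    ← Submodule.span_union]
  exact congrArg _ (Set.Sum.elim_range Mᵀ Nᵀ)

end FromCols

theorem rank_fromCols_diagonal {ι : Type*} [Fintype ι] [DecidableEq ι] [DecidableEq F]
    (v w : ι → F) :
    (fromCols (diagonal v) (diagonal w)).rank = Fintype.card {i // ¬(v i = 0 ∧ w i = 0)} := by
  -- `u` vanishes exactly where `v` and `w` both do, so `diagonal u` has the same column space.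
  set u : ι → F := fun i => if v i = 0 then w i else v i
  have hu (i : ι) : u i ≠ 0 ↔ ¬(v i = 0 ∧ w i = 0) := by
    simp only [u]
    split_ifs <;> simp_all
  have hsupp : {i | u i ≠ 0} = {i | v i ≠ 0} ∪ {i | w i ≠ 0} := by
    ext i
    simp only [Set.mem_ofPred_eq, Set.mem_union, hu, not_and_or]
  have hrange : LinearMap.range (fromCols (diagonal v) (diagonal w)).mulVecLin
      = LinearMap.range (diagonal u).mulVecLin := by
    rw [range_mulVecLin_fromCols, ← toLin'_apply', ← toLin'_apply', ← toLin'_apply',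
      range_diagonal, range_diagonal, range_diagonal, hsupp, iSup_union]
  rw [rank, hrange, ← rank, rank_diagonal]
  exact Fintype.card_congr (Equiv.subtypeEquivRight hu)

theorem card_subtype_not_and_prod {α β : Type*} [Fintype α] [Fintype β]
    (p : α → Prop) (q : β → Prop) [DecidablePred p] [DecidablePred q] :
    Fintype.card {x : α × β // ¬(p x.1 ∧ q x.2)}
      = Fintype.card α * Fintype.card β - Fintype.card {a // p a} * Fintype.card {b // q b} := by
  rw [Fintype.card_subtype_compl, Fintype.card_congr Equiv.subtypeProdEquivProd,
    Fintype.card_prod, Fintype.card_prod]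

theorem card_subtype_eq_zero_eq_card_sub_rank {n : Type*} [Fintype n] [DecidableEq n]
    [DecidableEq F] {P Q : Matrix n n F} (hP : IsUnit P.det) (hQ : IsUnit Q.det) (d : n → F) :
    Fintype.card {i // d i = 0} = Fintype.card n - (P * diagonal d * Q).rank := by
  rw [rank_mul_eq_left_of_isUnit_det _ _ hQ, rank_mul_eq_right_of_isUnit_det _ _ hP,
    rank_diagonal, ← Fintype.card_subtype_compl]
  simp only [not_not]

theorem rank_fromCols_kronecker_one_one_kronecker {m n : Type*} [Fintype m] [Fintype n]
    [DecidableEq m] [DecidableEq n] (A : Matrix m m F) (B : Matrix n n F) :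
    (fromCols (A ⊗ₖ (1 : Matrix n n F)) ((1 : Matrix m m F) ⊗ₖ B)).rank
      = Fintype.card m * Fintype.card n
        - (Fintype.card m - A.rank) * (Fintype.card n - B.rank) := by
  classical
  obtain ⟨P, Q, d, hP, hQ, rfl⟩ := exists_isUnit_det_mul_diagonal_mul A
  obtain ⟨P', Q', e, hP', hQ', rfl⟩ := exists_isUnit_det_mul_diagonal_mul B
  -- Both blocks are brought to diagonal form by the same left factor `P ⊗ P'`.
  have hA : (P * diagonal d * Q) ⊗ₖ (1 : Matrix n n F)
      = (P ⊗ₖ P') * (diagonal d ⊗ₖ 1) * (Q ⊗ₖ P'⁻¹) := by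
    rw [← mul_kronecker_mul, ← mul_kronecker_mul, Matrix.mul_one, mul_nonsing_inv _ hP']
  have hB : (1 : Matrix m m F) ⊗ₖ (P' * diagonal e * Q')
      = (P ⊗ₖ P') * (1 ⊗ₖ diagonal e) * (P⁻¹ ⊗ₖ Q') := by
    rw [← mul_kronecker_mul, ← mul_kronecker_mul, Matrix.mul_one, mul_nonsing_inv _ hP]
  have hdiag_one : diagonal d ⊗ₖ (1 : Matrix n n F) = diagonal fun x => d x.1 := by
    rw [← diagonal_one, diagonal_kronecker_diagonal]
    simp only [mul_one]
  have hone_diag : (1 : Matrix m m F) ⊗ₖ diagonal e = diagonal fun x => e x.2 := by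
    rw [← diagonal_one, diagonal_kronecker_diagonal]
    simp only [one_mul]
  rw [hA, hB, rank_fromCols_mul_mul (isUnit_det_kronecker hP hP')
      (isUnit_det_kronecker hQ (isUnit_nonsing_inv_det _ hP'))
      (isUnit_det_kronecker (isUnit_nonsing_inv_det _ hP) hQ'),
    hdiag_one, hone_diag, rank_fromCols_diagonal,
    card_subtype_not_and_prod (d · = 0) (e · = 0),
    card_subtype_eq_zero_eq_card_sub_rank hP hQ, card_subtype_eq_zero_eq_card_sub_rank hP' hQ']

end Matrix

/-- For `A, B : Matrix (Fin m) (Fin m) F` over a field `F`, with `k_A = m − rank A`,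
`k_B = m − rank B`, and `H_X = [A ⊗ I_m, −(I_m ⊗ B)]`, `H_Z = [I_m ⊗ Bᵀ, Aᵀ ⊗ I_m]`,
the dimension of the associated CSS (lifted product) code is `2·k_A·k_B`:
`2·m² = rank H_X + rank H_Z + 2·k_A·k_B`. -/
theorem dim_liftedProduct_CSS {F : Type*} [Field F] {m : ℕ}
    (A B : Matrix (Fin m) (Fin m) F) :
    2 * m ^ 2 =
      (Matrix.fromCols (A ⊗ₖ (1 : Matrix (Fin m) (Fin m) F))
          (-((1 : Matrix (Fin m) (Fin m) F) ⊗ₖ B))).rank +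
      (Matrix.fromCols ((1 : Matrix (Fin m) (Fin m) F) ⊗ₖ Bᵀ)
          (Aᵀ ⊗ₖ (1 : Matrix (Fin m) (Fin m) F))).rank +
      2 * ((m - A.rank) * (m - B.rank)) := by
  have hneg : IsUnit (-1 : Matrix (Fin m × Fin m) (Fin m × Fin m) F).det := by
    rw [det_neg, det_one, mul_one]
    exact isUnit_one.neg.pow _
  have hX := rank_fromCols_mul_mul (X := 1) (Y := 1) (by simp) (by simp) hneg
    (A ⊗ₖ (1 : Matrix (Fin m) (Fin m) F)) ((1 : Matrix (Fin m) (Fin m) F) ⊗ₖ B)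
  simp only [Matrix.one_mul, Matrix.mul_one, Matrix.mul_neg] at hX
  rw [hX, rank_fromCols_comm (Aᵀ ⊗ₖ (1 : Matrix (Fin m) (Fin m) F)),
    rank_fromCols_kronecker_one_one_kronecker, rank_fromCols_kronecker_one_one_kronecker,
    rank_transpose, rank_transpose, Fintype.card_fin]
  have hle : (m - A.rank) * (m - B.rank) ≤ m * m :=
    Nat.mul_le_mul (Nat.sub_le _ _) (Nat.sub_le _ _)
  rw [sq]
  omega
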